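/- arXiv:1905.11547 — 5 statements merged into one kernel-verified Lean document; each statement's English description precedes it below -/
import Mathlib

section
/- If ρ is an automorphism of exact order 4 of a free Z-module of rank 2, then ρ² = -id. -/
/-!
In a basis, `ρ` becomes an integer matrix `A`, and `B = A²` satisfies `B² = 1` and
`det B = (det A)² = 1`, because `det A` is a unit of `ℤ`. For a `2 × 2` matrix, Cayley–Hamilton
reads `B² = tr B • B - det B • 1`, hence `tr B • B = 2 • 1`; taking traces gives `(tr B)² = 4`,
so `tr B = ±2` and `B = ±1`. Since `B ≠ 1`, `B = -1`.
-/

theorem LinearEquiv.toLinearMap_pow_eq_one_iff {R M : Type*} [Semiring R] [AddCommMonoid M]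
    [Module R M] (e : M ≃ₗ[R] M) (n : ℕ) : e.toLinearMap ^ n = 1 ↔ e ^ n = 1 := by
  rw [← toLinearMap_injective.eq_iff]
  exact map_pow automorphismGroup.toLinearMapMonoidHom e n ▸ Iff.rfl

namespace Matrix

variable {R : Type*} [CommRing R]

theorem sq_fin_two_eq_trace_smul_sub_det_smul (A : Matrix (Fin 2) (Fin 2) R) :
    A ^ 2 = A.trace • A - A.det • (1 : Matrix (Fin 2) (Fin 2) R) := by
  ext i j
  fin_cases i <;> fin_cases j <;>
    simp [sq, mul_apply, trace_fin_two, det_fin_two] <;> ring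

theorem fin_two_eq_one_or_eq_neg_one_of_sq_eq_one [IsDomain R] [NeZero (2 : R)]
    {B : Matrix (Fin 2) (Fin 2) R} (hB : B ^ 2 = 1) (hdet : B.det = 1) :
    B = 1 ∨ B = -1 := by
  have hCH : B.trace • B = (2 : R) • (1 : Matrix (Fin 2) (Fin 2) R) := by
    have := B.sq_fin_two_eq_trace_smul_sub_det_smul
    rw [hB, hdet] at this
    linear_combination (norm := module) -this
  have htr : (B.trace - 2) * (B.trace + 2) = 0 := by
    have := congrArg trace hCH
    simp only [trace_smul, trace_one, Fintype.card_fin, smul_eq_mul] at this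
    linear_combination this
  rcases mul_eq_zero.mp htr with ht | ht
  · left
    rw [sub_eq_zero.mp ht] at hCH
    exact smul_right_injective _ (two_ne_zero : (2 : R) ≠ 0) hCH
  · right
    rw [eq_neg_of_add_eq_zero_left ht] at hCH
    refine smul_right_injective _ (two_ne_zero : (2 : R) ≠ 0) ?_
    simp only [smul_neg, ← hCH, neg_smul, neg_neg]

end Matrix

/-- If `ρ` is an automorphism of exact order 4 of a free `ℤ`-module of rank 2, then
`ρ² = -id`. -/
theorem stmt_2 (M : Type*) [AddCommGroup M] [Module ℤ M]
    (b0 : Module.Basis (Fin 2) ℤ M)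
    (ρ : M ≃ₗ[ℤ] M) (h4 : ρ ^ 4 = 1) (h2 : ρ ^ 2 ≠ 1) :
    (ρ.toLinearMap * ρ.toLinearMap : Module.End ℤ M) = -1 := by
  set A := LinearMap.toMatrixAlgEquiv b0 (ρ : Module.End ℤ M)
  -- not `AlgEquiv.injective`, which would look for the `Algebra ℤ` instance `Ring.toIntAlgebra`
  -- rather than `Module.End.instAlgebra`
  have hinj := EquivLike.injective (LinearMap.toMatrixAlgEquiv b0)
  have hA4 : A ^ 4 = 1 := by
    rw [← map_pow, (ρ.toLinearMap_pow_eq_one_iff 4).mpr h4, map_one]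
  have hA2 : A ^ 2 ≠ 1 := by
    rwa [← map_pow, Ne, map_eq_one_iff _ hinj, ρ.toLinearMap_pow_eq_one_iff]
  have hdet : (A ^ 2).det = 1 := by
    rw [Matrix.det_pow]
    refine Int.isUnit_sq (IsUnit.of_pow_eq_one (n := 4) ?_ four_ne_zero)
    rw [← Matrix.det_pow, hA4, Matrix.det_one]
  have hsq : A ^ 2 = -1 := (Matrix.fin_two_eq_one_or_eq_neg_one_of_sq_eq_one
    (by rw [← pow_mul, hA4]) hdet).resolve_left hA2
  rw [← hinj.eq_iff, map_mul, map_neg, map_one, ← sq, hsq]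
end

section
/- A positive definite even lattice T of rank 2 admits an isometry of order 3 if and only if there exists a positive integer a such that T is isometric to A2(a), i.e., T has a basis with Gram matrix [[2a, a],[a, 2a]]. -/
/-!
An isometry `ρ` of order 3 of a rank-2 lattice satisfies `ρ² + ρ + 1 = 0`: by Cayley–Hamilton,
an integral `2 × 2` matrix of order 3 has determinant `1` and trace `-1`. For a shortest nonzero
vector `v`, of norm `2a`, this relation and the invariance of `B` give `B(v, ρv) = -a`, so `v` and
`-ρv` have Gram matrix `A₂(a)`. They span the lattice: modulo their span every vector is a
rational combination of them with coefficients in `[-1/2, 1/2]`, whose norm is at most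
`3/4 · 2a`, hence it is zero by minimality. Conversely, on a basis with Gram matrix `A₂(a)` the
map `e₀ ↦ -e₁, e₁ ↦ e₀ - e₁` is an isometry of order 3.
-/

open Module Submodule

theorem Int.exists_two_mul_abs_sub_mul_le (c : ℤ) {m : ℤ} (hm : m ≠ 0) :
    ∃ k : ℤ, 2 * |c - m * k| ≤ |m| := by
  refine ⟨round ((c : ℚ) / m), ?_⟩
  have hm' : (m : ℚ) ≠ 0 := by exact_mod_cast hm
  have hfactor : (c : ℚ) - m * round ((c : ℚ) / m) = m * ((c : ℚ) / m - round ((c : ℚ) / m)) := by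
    field_simp
  have key : 2 * |(c : ℚ) - m * round ((c : ℚ) / m)| ≤ |(m : ℚ)| := by
    rw [hfactor, abs_mul]
    nlinarith [abs_sub_round ((c : ℚ) / m), abs_nonneg (m : ℚ)]
  exact_mod_cast key

theorem four_mul_sq_add_mul_add_sq_le {α : Type*} [CommRing α] [LinearOrder α]
    [IsStrictOrderedRing α] {c d m : α} (hc : 2 * |c| ≤ |m|) (hd : 2 * |d| ≤ |m|) :
    4 * (c ^ 2 + c * d + d ^ 2) ≤ 3 * m ^ 2 := by
  have hcd : 4 * (c * d) ≤ m ^ 2 := by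
    nlinarith [le_abs_self (c * d), abs_mul c d, sq_abs m,
      mul_le_mul hc hd (by positivity) (abs_nonneg m)]
  nlinarith [sq_abs c, sq_abs d, sq_abs m, mul_self_le_mul_self (by positivity) hc,
    mul_self_le_mul_self (by positivity) hd]

theorem exists_smul_mem_span_of_finrank_eq {R M : Type*} [Ring R] [StrongRankCondition R]
    [AddCommGroup M] [Module R M] [Module.Finite R M] {n : ℕ} {v : Fin n → M}
    (hv : LinearIndependent R v) (hn : finrank R M = n) (x : M) :
    ∃ c : R, c ≠ 0 ∧ c • x ∈ span R (Set.range v) := by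
  by_contra! h
  have hcons : LinearIndependent R (Fin.cons x v : Fin (n + 1) → M) := by
    refine .finCons' x v hv fun c y hy hxy => ?_
    by_contra hc
    exact h c hc (by rw [eq_neg_of_add_eq_zero_left hxy]; exact neg_mem hy)
  simpa [hn] using hcons.fintype_card_le_finrank

theorem Matrix.sq_add_self_add_one_eq_zero_of_pow_three_eq_one {A : Matrix (Fin 2) (Fin 2) ℤ}
    (h3 : A ^ 3 = 1) (h1 : A ≠ 1) : A ^ 2 + A + 1 = 0 := by
  set t := A.trace
  have hdet : A.det = 1 := by
    have : A.det ^ 3 = 1 := by rw [← det_pow, h3, det_one]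
    simpa [pow_eq_one_iff_of_ne_zero, show ¬ Even 3 by decide] using this
  have hCH : A ^ 2 - t • A + 1 = 0 := by
    simpa [charpoly_fin_two, hdet, Algebra.algebraMap_eq_smul_one, smul_mul_assoc]
      using A.aeval_self_charpoly
  have hcube : (t ^ 2 - 1) • A = (t + 1) • (1 : Matrix (Fin 2) (Fin 2) ℤ) := by
    have hsq : A ^ 2 = t • A - 1 := by rw [← sub_eq_zero, ← hCH]; abel
    have : A ^ 3 = t • (t • A - 1) - A := by
      rw [pow_succ', hsq, mul_sub, mul_smul_comm, mul_one, ← sq, hsq]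
    rw [h3] at this
    linear_combination (norm := module) -this
  have htrace : (t + 1) ^ 2 * (t - 2) = 0 := by
    have := congrArg Matrix.trace hcube
    simp only [trace_smul, trace_one, Fintype.card_fin, smul_eq_mul] at this
    linear_combination this
  rcases mul_eq_zero.mp htrace with ht | ht
  · have ht : t = -1 := by nlinarith
    simpa [ht] using hCH
  · have ht : t = 2 := by linarith
    refine absurd (smul_right_injective _ (three_ne_zero (α := ℤ)) ?_) h1
    simpa [ht] using hcube

section Lattice

variable {M : Type*} [AddCommGroup M]

theorem Module.End.sq_add_self_add_one_eq_zero_of_pow_three_eq_one (b : Basis (Fin 2) ℤ M)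
    {f : Module.End ℤ M} (h3 : f ^ 3 = 1) (h1 : f ≠ 1) : f ^ 2 + f + 1 = 0 := by
  let φ := (LinearMap.toMatrixAlgEquiv b).toRingEquiv
  apply φ.injective
  rw [map_zero, map_add, map_add, map_pow, map_one]
  refine Matrix.sq_add_self_add_one_eq_zero_of_pow_three_eq_one ?_ ?_
  · rw [← map_pow, h3, map_one]
  · rwa [← map_one φ, φ.injective.ne_iff]

theorem LinearEquiv.apply_apply_add_apply_add_self_eq_zero (b : Basis (Fin 2) ℤ M)
    {ρ : M ≃ₗ[ℤ] M} (hρ : orderOf ρ = 3) (v : M) : ρ (ρ v) + ρ v + v = 0 := by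
  let toEnd := LinearEquiv.automorphismGroup.toLinearMapMonoidHom (R := ℤ) (M := M)
  have hinj : Function.Injective toEnd := fun _ _ h => LinearEquiv.toLinearMap_injective h
  have h := Module.End.sq_add_self_add_one_eq_zero_of_pow_three_eq_one b (f := toEnd ρ)
    (by rw [← map_pow, ← hρ, pow_orderOf_eq_one, map_one])
    (by rw [← map_one toEnd, hinj.ne_iff]; rintro rfl; simp at hρ)
  simpa [sq, toEnd] using LinearMap.congr_fun h v

variable {B : M →ₗ[ℤ] M →ₗ[ℤ] ℤ}

def IsA2Pair (B : M →ₗ[ℤ] M →ₗ[ℤ] ℤ) (a : ℤ) (x y : M) : Prop :=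
  B x x = 2 * a ∧ B x y = a ∧ B y y = 2 * a

theorem IsA2Pair.apply_smul_add_smul_self (hsymm : ∀ v w, B v w = B w v) {a : ℤ} {x y : M}
    (h : IsA2Pair B a x y) (c d : ℤ) :
    B (c • x + d • y) (c • x + d • y) = 2 * a * (c ^ 2 + c * d + d ^ 2) := by
  obtain ⟨hx, hxy, hy⟩ := h
  have hyx : B y x = a := by rw [hsymm, hxy]
  simp only [map_add, map_zsmul, LinearMap.add_apply, LinearMap.smul_apply, smul_eq_mul,
    hx, hxy, hyx, hy]
  ring

theorem IsA2Pair.linearIndependent (hsymm : ∀ v w, B v w = B w v) {a : ℤ} {x y : M}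
    (h : IsA2Pair B a x y) (ha : a ≠ 0) : LinearIndependent ℤ ![x, y] := by
  refine LinearIndependent.pair_iff.mpr fun c d hcd => ?_
  have hq : c ^ 2 + c * d + d ^ 2 = 0 := by
    simpa [hcd, ha, eq_comm] using h.apply_smul_add_smul_self hsymm c d
  constructor <;> nlinarith [sq_nonneg (c + d), sq_nonneg c, sq_nonneg d]

theorem IsA2Pair.span_eq_top [Module.Finite ℤ M] (hsymm : ∀ v w, B v w = B w v)
    (hrank : finrank ℤ M = 2) {a : ℤ} {x y : M} (h : IsA2Pair B a x y) (ha : 0 < a)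
    (hmin : ∀ u : M, u ≠ 0 → 2 * a ≤ B u u) : span ℤ (Set.range ![x, y]) = ⊤ := by
  refine eq_top_iff'.mpr fun u => ?_
  obtain ⟨m, hm, hmu⟩ :=
    exists_smul_mem_span_of_finrank_eq (h.linearIndependent hsymm ha.ne') hrank u
  rw [Matrix.range_cons_cons_empty, mem_span_pair] at hmu ⊢
  obtain ⟨c, d, hcd⟩ := hmu
  obtain ⟨k, hk⟩ := Int.exists_two_mul_abs_sub_mul_le c hm
  obtain ⟨l, hl⟩ := Int.exists_two_mul_abs_sub_mul_le d hm
  refine ⟨k, l, ?_⟩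
  by_contra hne
  set u' := u - (k • x + l • y)
  have hu' : u' ≠ 0 := fun h0 => hne (sub_eq_zero.mp h0).symm
  have hmu' : m • u' = (c - m * k) • x + (d - m * l) • y := by
    simp only [u', smul_sub, ← hcd, smul_add, sub_smul, mul_smul]; abel
  have hnorm : m ^ 2 * B u' u' =
      2 * a * ((c - m * k) ^ 2 + (c - m * k) * (d - m * l) + (d - m * l) ^ 2) := by
    rw [← h.apply_smul_add_smul_self hsymm, ← hmu']
    simp only [map_zsmul, LinearMap.smul_apply, smul_eq_mul]
    ring
  have hsmall := four_mul_sq_add_mul_add_sq_le hk hl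
  nlinarith [sq_pos_of_ne_zero hm, mul_le_mul_of_nonneg_left (hmin u' hu') (sq_nonneg m)]

theorem exists_ne_zero_forall_apply_self_le (hpos : ∀ v : M, v ≠ 0 → 0 < B v v)
    {v₀ : M} (hv₀ : v₀ ≠ 0) : ∃ v : M, v ≠ 0 ∧ ∀ u : M, u ≠ 0 → B v v ≤ B u u := by
  obtain ⟨n, ⟨v, hv, rfl⟩, hmin⟩ :=
    Int.exists_least_of_bdd (P := fun n => ∃ v : M, v ≠ 0 ∧ B v v = n)
      ⟨0, fun _ ⟨u, hu, hn⟩ => hn ▸ (hpos u hu).le⟩ ⟨_, v₀, hv₀, rfl⟩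
  exact ⟨v, hv, fun u hu => hmin _ ⟨u, hu, rfl⟩⟩

theorem isA2Pair_neg_apply (hsymm : ∀ v w, B v w = B w v) {ρ : M → M}
    (hiso : ∀ v w, B (ρ v) (ρ w) = B v w) {v : M} (hrel : ρ (ρ v) + ρ v + v = 0) {a : ℤ}
    (hv : B v v = 2 * a) : IsA2Pair B a v (-ρ v) := by
  have hρρ : ρ (ρ v) = -ρ v - v := by rw [← sub_eq_zero, ← hrel]; abel
  have hρ : B (ρ v) (ρ v) = 2 * a := by rw [hiso, hv]
  have key := hiso v (ρ v)
  rw [hρρ, map_sub, map_neg, hρ, hsymm (ρ v) v] at key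
  refine ⟨hv, ?_, by simp only [map_neg, LinearMap.neg_apply, neg_neg, hρ]⟩
  rw [map_neg]
  linarith

theorem exists_isA2Pair_basis_of_orderOf_eq_three (b : Basis (Fin 2) ℤ M)
    (hsymm : ∀ v w, B v w = B w v) (hpos : ∀ v : M, v ≠ 0 → 0 < B v v)
    (heven : ∀ v : M, Even (B v v)) {ρ : M ≃ₗ[ℤ] M} (hiso : ∀ v w, B (ρ v) (ρ w) = B v w)
    (hρ : orderOf ρ = 3) : ∃ a : ℤ, 0 < a ∧ ∃ e : Basis (Fin 2) ℤ M, IsA2Pair B a (e 0) (e 1) := by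
  have : Module.Finite ℤ M := .of_basis b
  obtain ⟨v, hv0, hmin⟩ := exists_ne_zero_forall_apply_self_le hpos (b.ne_zero 0)
  obtain ⟨a, ha⟩ := heven v
  have hv : B v v = 2 * a := by rw [ha, two_mul]
  have ha0 : 0 < a := by linarith [hpos v hv0]
  have hpair := isA2Pair_neg_apply hsymm hiso (ρ.apply_apply_add_apply_add_self_eq_zero b hρ v) hv
  have hspan := hpair.span_eq_top hsymm (by simp [finrank_eq_card_basis b]) ha0
    fun u hu => hv ▸ hmin u hu
  exact ⟨a, ha0, .mk (hpair.linearIndependent hsymm ha0.ne') hspan.ge, by simpa using hpair⟩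

theorem exists_isometry_orderOf_eq_three (hsymm : ∀ v w, B v w = B w v) {a : ℤ}
    (e : Basis (Fin 2) ℤ M) (h : IsA2Pair B a (e 0) (e 1)) :
    ∃ ρ : M ≃ₗ[ℤ] M, (∀ v w, B (ρ v) (ρ w) = B v w) ∧ orderOf ρ = 3 := by
  obtain ⟨h00, h01, h11⟩ := h
  have h10 : B (e 1) (e 0) = a := by rw [hsymm, h01]
  set f : Module.End ℤ M := e.constr ℤ ![-e 1, e 0 - e 1]
  have hf0 : f (e 0) = -e 1 := by simp [f]
  have hf1 : f (e 1) = e 0 - e 1 := by simp [f]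
  have hf3 : f ^ 3 = 1 := by
    refine e.ext fun i => ?_
    fin_cases i <;>
      simp only [Fin.zero_eta, Fin.mk_one, pow_succ, pow_zero, Module.End.mul_apply,
        Module.End.one_apply, hf0, hf1, map_neg, map_sub] <;> abel
  let ρ : M ≃ₗ[ℤ] M := LinearEquiv.ofLinearMap (f := f) (g := f ^ 2)
    (by rw [← Module.End.mul_eq_comp, ← pow_succ', hf3]; rfl)
    (by rw [← Module.End.mul_eq_comp, ← pow_succ, hf3]; rfl)
  have hρ : ∀ v, ρ v = f v := fun _ => rfl
  refine ⟨ρ, fun v w => ?_, orderOf_eq_prime ?_ ?_⟩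
  · have hB : B.compl₁₂ f f = B := by
      refine LinearMap.ext_basis e e fun i j => ?_
      fin_cases i <;> fin_cases j <;> simp [hf0, hf1, h00, h01, h10, h11] <;> ring
    exact LinearMap.congr_fun₂ hB v w
  · ext v
    simpa [LinearEquiv.pow_apply, pow_succ, hρ] using LinearMap.congr_fun hf3 v
  · intro h1
    have : -e 1 = e 0 := by rw [← hf0, ← hρ, h1]; rfl
    simpa using congrArg (fun x => e.repr x 0) this

end Lattice

/-- A positive definite even lattice of rank 2 admits an isometry of order 3 iff it is
isometric to `A₂(a)` for some positive integer `a`, i.e. it has a basis with Gram matrix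
`[[2a, a],[a, 2a]]`. -/
theorem stmt_3 (M : Type*) [AddCommGroup M] [Module ℤ M]
    (b0 : Module.Basis (Fin 2) ℤ M)
    (B : M →ₗ[ℤ] M →ₗ[ℤ] ℤ)
    (hsymm : ∀ v w : M, B v w = B w v)
    (hpos : ∀ v : M, v ≠ 0 → 0 < B v v)
    (heven : ∀ v : M, Even (B v v)) :
    (∃ ρ : M ≃ₗ[ℤ] M, (∀ v w : M, B (ρ v) (ρ w) = B v w) ∧ orderOf ρ = 3) ↔
    (∃ a : ℤ, 0 < a ∧ ∃ e : Module.Basis (Fin 2) ℤ M,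
      B (e 0) (e 0) = 2 * a ∧ B (e 0) (e 1) = a ∧ B (e 1) (e 1) = 2 * a) := by
  obtain rfl : ‹Module ℤ M› = AddCommGroup.toIntModule M := Subsingleton.elim _ _
  constructor
  · rintro ⟨ρ, hiso, hρ⟩
    exact exists_isA2Pair_basis_of_orderOf_eq_three b0 hsymm hpos heven hiso hρ
  · rintro ⟨a, -, e, he⟩
    exact exists_isometry_orderOf_eq_three hsymm e he
end

section
/- A positive definite even lattice T of rank 2 admits an isometry of order 4 if and only if there exists a positive integer a such that T has a basis with Gram matrix [[2a, 0],[0, 2a]] (i.e., T ≅ A1²(2a)). -/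
/-!
An isometry `ρ` of order 4 of a rank-2 lattice satisfies `ρ² = -1`: the matrix `S` of `ρ²` is an
involution of determinant 1, so Cayley–Hamilton gives `tr S • S = 2`, forcing `S = ±1`.
Hence `v ⊥ ρ v` and `B (ρ v) (ρ v) = B v v` for every `v`. If `v` has minimal norm `m`, then
`m • w = B w v • v + B w (ρ v) • ρ v` for every `w` (the difference is orthogonal to two
orthogonal vectors in rank 2); rounding both coefficients to the nearest multiple of `m` leaves
a vector of norm at most `m / 2`, which must vanish, so `v, ρ v` is a basis. Conversely the
quarter turn `e₀ ↦ e₁ ↦ -e₀` is an isometry of order 4 of `A₁²(2a)`.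
-/

open Module

open Polynomial in
theorem Matrix.sq_eq_trace_smul_sub_det_smul_one {R : Type*} [CommRing R]
    (S : Matrix (Fin 2) (Fin 2) R) : S ^ 2 = S.trace • S - S.det • 1 := by
  nontriviality R
  have := S.aeval_self_charpoly
  simp only [S.charpoly_fin_two, map_add, map_sub, map_pow, map_mul, aeval_X, aeval_C,
    Algebra.algebraMap_eq_smul_one, smul_one_mul] at this
  linear_combination (norm := module) this

theorem Matrix.eq_one_or_eq_neg_one_of_sq_eq_one {R : Type*} [CommRing R] [IsDomain R]
    (h2 : (2 : R) ≠ 0) {S : Matrix (Fin 2) (Fin 2) R} (hS : S ^ 2 = 1) (hdet : S.det = 1) :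
    S = 1 ∨ S = -1 := by
  have htS : S.trace • S = (2 : R) • 1 := by
    calc S.trace • S = S ^ 2 + S.det • 1 := by rw [S.sq_eq_trace_smul_sub_det_smul_one]; abel
      _ = (2 : R) • 1 := by rw [hS, hdet, one_smul, two_smul]
  have htt : S.trace * S.trace = 2 * 2 := by
    simpa [Matrix.trace_smul, Matrix.trace_one] using congrArg Matrix.trace htS
  rcases mul_self_eq_mul_self_iff.mp htt with ht | ht
  · exact .inl <| smul_right_injective _ h2 (by rwa [ht] at htS)
  · refine .inr <| smul_right_injective _ h2 ?_
    rwa [ht, neg_smul, neg_eq_iff_eq_neg, ← smul_neg] at htS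

theorem Matrix.sq_eq_neg_one_of_orderOf_eq_four {A : Matrix (Fin 2) (Fin 2) ℤ}
    (hA : orderOf A = 4) : A ^ 2 = -1 := by
  have h4 : A ^ 4 = 1 := hA ▸ pow_orderOf_eq_one A
  have hdet : (A ^ 2).det = 1 := by
    rw [Matrix.det_pow]
    refine Int.isUnit_sq (.of_mul_eq_one (A.det ^ 3) ?_)
    rw [← pow_succ', ← Matrix.det_pow, h4, Matrix.det_one]
  have hne : A ^ 2 ≠ 1 := pow_ne_one_of_lt_orderOf two_ne_zero (by omega)
  refine ((A ^ 2).eq_one_or_eq_neg_one_of_sq_eq_one two_ne_zero ?_ hdet).resolve_left hne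
  rw [← pow_mul, h4]

theorem LinearEquiv.orderOf_toMatrix {R M n : Type*} [CommRing R] [AddCommGroup M] [Module R M]
    [Fintype n] [DecidableEq n] (b : Basis n R M) (ρ : M ≃ₗ[R] M) :
    orderOf (LinearMap.toMatrix b b ρ) = orderOf ρ :=
  orderOf_injective ((LinearMap.toMatrixAlgEquiv b).toMonoidHom.comp
    LinearEquiv.automorphismGroup.toLinearMapMonoidHom)
    ((LinearMap.toMatrixAlgEquiv b).injective.comp LinearEquiv.toLinearMap_injective) ρ

theorem LinearEquiv.apply_apply_eq_neg_of_orderOf_eq_four {M : Type*} [AddCommGroup M]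
    [Module ℤ M] (b : Basis (Fin 2) ℤ M) {ρ : M ≃ₗ[ℤ] M} (hρ : orderOf ρ = 4) (v : M) :
    ρ (ρ v) = -v := by
  have hsq := Matrix.sq_eq_neg_one_of_orderOf_eq_four ((ρ.orderOf_toMatrix b).trans hρ)
  have : (ρ : M →ₗ[ℤ] M) ∘ₗ ρ = -LinearMap.id := (LinearMap.toMatrix b b).injective <| by
    rw [LinearMap.toMatrix_comp b b b, ← sq, hsq, map_neg, LinearMap.toMatrix_id b]
  simpa using LinearMap.congr_fun this v

theorem Matrix.orderOf_quarterTurn {R : Type*} [Ring R] (h2 : (2 : R) ≠ 0) :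
    orderOf !![(0 : R), -1; 1, 0] = 4 := by
  have hsq : !![(0:R), -1; 1, 0] ^ 2 = -1 := by
    ext i j; fin_cases i <;> fin_cases j <;> simp [sq]
  refine orderOf_eq_prime_pow (p := 2) (n := 1) ?_ ?_
  · rw [pow_one, hsq]; intro h
    have := congrFun (congrFun h 0) 0
    simp only [Matrix.neg_apply, Matrix.one_apply_eq] at this
    exact h2 (one_add_one_eq_two (R := R) ▸ neg_eq_iff_add_eq_zero.mp this)
  · rw [pow_succ, pow_one, pow_mul, hsq]; simp

theorem linearIndependent_of_pairwise_orthogonal {R M ι : Type*} [CommRing R] [IsDomain R]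
    [AddCommGroup M] [Module R M] (B : M →ₗ[R] M →ₗ[R] R) {v : ι → M}
    (hortho : Pairwise fun i j ↦ B (v i) (v j) = 0) (hself : ∀ i, B (v i) (v i) ≠ 0) :
    LinearIndependent R v := by
  rw [linearIndependent_iff']
  intro s g hg i hi
  have h0 : ∑ j ∈ s, g j * B (v j) (v i) = 0 := by
    simpa [map_sum] using congrArg (B · (v i)) hg
  rw [Finset.sum_eq_single_of_mem i hi fun j _ hji ↦ by rw [hortho hji, mul_zero]] at h0
  exact (mul_eq_zero.mp h0).resolve_right (hself i)

theorem Int.exists_eq_mul_add_of_two_mul_abs_le {m : ℤ} (hm : 0 < m) (a : ℤ) :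
    ∃ q r : ℤ, a = q * m + r ∧ 2 * |r| ≤ m := by
  have hdiv := Int.mul_ediv_add_emod a m
  have h0 := Int.emod_nonneg a hm.ne'
  have hlt := Int.emod_lt_of_pos a hm
  by_cases h : 2 * (a % m) ≤ m
  · exact ⟨a / m, a % m, by linear_combination -hdiv, by rwa [abs_of_nonneg h0]⟩
  · refine ⟨a / m + 1, a % m - m, by linear_combination -hdiv, ?_⟩
    rw [abs_of_nonpos (by omega)]
    omega

section PositiveDefinite

variable {M : Type*} [AddCommGroup M] {B : M →ₗ[ℤ] M →ₗ[ℤ] ℤ}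

theorem exists_ne_zero_forall_le (hpos : ∀ v : M, v ≠ 0 → 0 < B v v) [Nontrivial M] :
    ∃ v ≠ 0, ∀ w ≠ 0, B v v ≤ B w w := by
  obtain ⟨x, hx⟩ := exists_ne (0 : M)
  obtain ⟨_, ⟨v, hv, rfl⟩, hmin⟩ := Int.exists_least_of_bdd (P := fun n ↦ ∃ w ≠ 0, B w w = n)
    ⟨0, fun _ ⟨w, hw, hn⟩ ↦ hn ▸ (hpos w hw).le⟩ ⟨_, x, hx, rfl⟩
  exact ⟨v, hv, fun w hw ↦ hmin _ ⟨w, hw, rfl⟩⟩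

theorem eq_zero_of_orthogonal_pair (hsymm : ∀ v w : M, B v w = B w v)
    (hpos : ∀ v : M, v ≠ 0 → 0 < B v v) [Module.Finite ℤ M] (hrank : finrank ℤ M = 2)
    {x y w : M} (hx : x ≠ 0) (hy : y ≠ 0) (hxy : B x y = 0) (hwx : B w x = 0) (hwy : B w y = 0) :
    w = 0 := by
  by_contra hw
  have hli : LinearIndependent ℤ ![x, y, w] := by
    refine linearIndependent_of_pairwise_orthogonal B ?_ ?_
    · intro i j hij
      fin_cases i <;> fin_cases j <;>
        simp_all [(hsymm y x).trans hxy, (hsymm x w).trans hwx, (hsymm y w).trans hwy]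
    · intro i
      fin_cases i <;> simp [(hpos _ hx).ne', (hpos _ hy).ne', (hpos _ hw).ne']
  simpa [hrank] using hli.fintype_card_le_finrank

theorem smul_eq_add_of_orthogonal_pair (hsymm : ∀ v w : M, B v w = B w v)
    (hpos : ∀ v : M, v ≠ 0 → 0 < B v v) [Module.Finite ℤ M] (hrank : finrank ℤ M = 2)
    {x y : M} (hx : x ≠ 0) (hy : y ≠ 0) (hxy : B x y = 0) (hyy : B y y = B x x) (w : M) :
    B x x • w = B w x • x + B w y • y := by
  rw [← sub_eq_zero]
  refine eq_zero_of_orthogonal_pair hsymm hpos hrank hx hy hxy ?_ ?_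
  · simp [(hsymm y x).trans hxy, mul_comm]
  · simp [hxy, hyy, mul_comm]

theorem mem_span_pair_of_forall_le (hsymm : ∀ v w : M, B v w = B w v)
    (hpos : ∀ v : M, v ≠ 0 → 0 < B v v) [Module.Finite ℤ M] (hrank : finrank ℤ M = 2)
    {x y : M} (hx : x ≠ 0) (hy : y ≠ 0) (hxy : B x y = 0) (hyy : B y y = B x x)
    (hmin : ∀ w ≠ 0, B x x ≤ B w w) (w : M) : w ∈ Submodule.span ℤ {x, y} := by
  set m := B x x
  have hm0 : 0 < m := hpos x hx
  obtain ⟨q₁, r₁, hq₁, hr₁⟩ := Int.exists_eq_mul_add_of_two_mul_abs_le hm0 (B w x)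
  obtain ⟨q₂, r₂, hq₂, hr₂⟩ := Int.exists_eq_mul_add_of_two_mul_abs_le hm0 (B w y)
  set u := w - (q₁ • x + q₂ • y)
  have hmu : m • u = r₁ • x + r₂ • y := by
    have := smul_eq_add_of_orthogonal_pair hsymm hpos hrank hx hy hxy hyy w
    rw [hq₁, hq₂] at this
    linear_combination (norm := module) this
  have hnorm : m * B u u = r₁ ^ 2 + r₂ ^ 2 := by
    refine mul_left_cancel₀ hm0.ne' ?_
    calc m * (m * B u u) = B (m • u) (m • u) := by simp
      _ = B (r₁ • x + r₂ • y) (r₁ • x + r₂ • y) := by rw [hmu]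
      _ = m * (r₁ ^ 2 + r₂ ^ 2) := by
        simp only [map_add, map_smul, LinearMap.add_apply, LinearMap.smul_apply, smul_eq_mul,
          hxy, (hsymm y x).trans hxy, hyy]
        ring
  have hu : u = 0 := by
    by_contra hu
    have := hmin u hu
    nlinarith [sq_abs r₁, sq_abs r₂, abs_nonneg r₁, abs_nonneg r₂]
  exact Submodule.mem_span_pair.mpr ⟨q₁, q₂, (sub_eq_zero.mp hu).symm⟩

theorem exists_basis_of_apply_apply_eq_neg (hsymm : ∀ v w : M, B v w = B w v)
    (hpos : ∀ v : M, v ≠ 0 → 0 < B v v) [Module.Finite ℤ M] (hrank : finrank ℤ M = 2)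
    {ρ : M →ₗ[ℤ] M} (hiso : ∀ v w, B (ρ v) (ρ w) = B v w) (hρ : ∀ v, ρ (ρ v) = -v) :
    ∃ e : Basis (Fin 2) ℤ M,
      0 < B (e 0) (e 0) ∧ B (e 0) (e 1) = 0 ∧ B (e 1) (e 1) = B (e 0) (e 0) := by
  have : Nontrivial M := Module.nontrivial_of_finrank_eq_succ hrank
  obtain ⟨v, hv, hmin⟩ := exists_ne_zero_forall_le hpos
  have hvρv : B v (ρ v) = 0 := by
    have := hiso v (ρ v)
    rw [hρ, map_neg, hsymm (ρ v)] at this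
    omega
  have hnorm := hiso v v
  have hρv : ρ v ≠ 0 := fun h ↦ (hpos v hv).ne' (by simpa [h] using hnorm.symm)
  have hli : LinearIndependent ℤ ![v, ρ v] := by
    refine linearIndependent_of_pairwise_orthogonal B ?_ ?_
    · intro i j hij
      fin_cases i <;> fin_cases j <;> simp_all [(hsymm _ _).trans hvρv]
    · intro i
      fin_cases i <;> simp [(hpos _ hv).ne', (hpos _ hρv).ne']
  have hsp : ⊤ ≤ Submodule.span ℤ (Set.range ![v, ρ v]) := fun w _ ↦ by
    rw [Matrix.range_cons_cons_empty]
    exact mem_span_pair_of_forall_le hsymm hpos hrank hv hρv hvρv hnorm hmin w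
  refine ⟨.mk hli hsp, ?_⟩
  simp [hpos v hv, hvρv, hnorm]

end PositiveDefinite

theorem isometry_of_rotate_orthogonal_basis {R M : Type*} [CommRing R] [AddCommGroup M]
    [Module R M] {B : M →ₗ[R] M →ₗ[R] R} (e : Basis (Fin 2) R M) (h01 : B (e 0) (e 1) = 0)
    (h10 : B (e 1) (e 0) = 0) (h11 : B (e 1) (e 1) = B (e 0) (e 0)) {ρ : M →ₗ[R] M}
    (hρ0 : ρ (e 0) = e 1) (hρ1 : ρ (e 1) = -e 0) (v w : M) : B (ρ v) (ρ w) = B v w := by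
  have : B.compl₁₂ ρ ρ = B := LinearMap.ext_basis e e fun i j ↦ by
    fin_cases i <;> fin_cases j <;> simp [hρ0, hρ1, h01, h10, h11]
  exact LinearMap.congr_fun₂ this v w

/-- A positive definite even lattice of rank 2 admits an isometry of order 4 iff it has a
basis with Gram matrix `[[2a, 0],[0, 2a]]` for some positive integer `a`. -/
theorem stmt_4 (M : Type*) [AddCommGroup M] [Module ℤ M]
    (b0 : Module.Basis (Fin 2) ℤ M)
    (B : M →ₗ[ℤ] M →ₗ[ℤ] ℤ)
    (hsymm : ∀ v w : M, B v w = B w v)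
    (hpos : ∀ v : M, v ≠ 0 → 0 < B v v)
    (heven : ∀ v : M, Even (B v v)) :
    (∃ ρ : M ≃ₗ[ℤ] M, (∀ v w : M, B (ρ v) (ρ w) = B v w) ∧ orderOf ρ = 4) ↔
    (∃ a : ℤ, 0 < a ∧ ∃ e : Module.Basis (Fin 2) ℤ M,
      B (e 0) (e 0) = 2 * a ∧ B (e 0) (e 1) = 0 ∧ B (e 1) (e 1) = 2 * a) := by
  obtain rfl : ‹Module ℤ M› = AddCommGroup.toIntModule M := Subsingleton.elim _ _
  have : Module.Finite ℤ M := .of_basis b0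
  have hrank : finrank ℤ M = 2 := by simp [finrank_eq_card_basis b0]
  constructor
  · rintro ⟨ρ, hiso, hord⟩
    obtain ⟨e, he0, he01, he11⟩ := exists_basis_of_apply_apply_eq_neg hsymm hpos hrank
      (ρ := ρ.toLinearMap) hiso (ρ.apply_apply_eq_neg_of_orderOf_eq_four b0 hord)
    obtain ⟨a, ha⟩ := heven (e 0)
    exact ⟨a, by omega, e, by omega, he01, by omega⟩
  · rintro ⟨a, -, e, h00, h01, h11⟩
    let ρ := Matrix.toLinearEquiv e !![0, -1; 1, 0] (by simp [Matrix.det_fin_two])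
    have hρ0 : ρ (e 0) = e 1 := by simp [ρ, Matrix.toLin_self]
    have hρ1 : ρ (e 1) = -e 0 := by simp [ρ, Matrix.toLin_self]
    refine ⟨ρ, isometry_of_rotate_orthogonal_basis e h01 ((hsymm _ _).trans h01)
      (h11.trans h00.symm) hρ0 hρ1, ?_⟩
    rw [← ρ.orderOf_toMatrix e,
      show LinearMap.toMatrix e e ρ = _ from LinearMap.toMatrix_toLin e e _]
    exact Matrix.orderOf_quarterTurn two_ne_zero
end

section
/- Let ι be an involution acting by isometries on an even unimodular lattice L, and let L⁺ = L^ι be the invariant sublattice. Then the discriminant group A = (L⁺)*/L⁺ of L⁺ is annihilated by 2; in particular its order is a power of 2. -/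
/-!
Twice a functional `φ` on `L⁺` factors through the norm map `N v = v + ι v`, since `N m = 2 m`
on `L⁺`. By unimodularity `φ ∘ N` is `B x` for some `x ∈ L`, and `x` is `ι`-invariant because
`φ ∘ N` is and `B` is a nondegenerate `ι`-invariant form. Then `B x m = φ (N m) = 2 φ m`.
-/

namespace LinearEquiv

variable {R M : Type*} [CommRing R] [AddCommGroup M] [Module R M] (ι : M ≃ₗ[R] M)

theorem mem_ker_sub_id_iff {x : M} :
    x ∈ LinearMap.ker (ι.toLinearMap - LinearMap.id) ↔ ι x = x := by
  simp [sub_eq_zero]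

variable {ι}

theorem add_apply_mem_ker_sub_id (hinv : ∀ x, ι (ι x) = x) (v : M) :
    v + ι v ∈ LinearMap.ker (ι.toLinearMap - LinearMap.id) := by
  rw [mem_ker_sub_id_iff, map_add, hinv, add_comm]

theorem apply_eq_self_of_bilin_apply_eq (hinv : ∀ x, ι (ι x) = x) {B : M →ₗ[R] M →ₗ[R] R}
    (hB : Function.Injective B) (hiso : ∀ v w, B (ι v) (ι w) = B v w) {x : M}
    (hx : ∀ v, B x (ι v) = B x v) : ι x = x :=
  hB <| LinearMap.ext fun v =>
    calc B (ι x) v = B (ι x) (ι (ι v)) := by rw [hinv]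
      _ = B x v := by rw [hiso, hx]

def involutionNorm (hinv : ∀ x, ι (ι x) = x) :
    M →ₗ[R] LinearMap.ker (ι.toLinearMap - LinearMap.id) :=
  (LinearMap.id + ι.toLinearMap).codRestrict _ (add_apply_mem_ker_sub_id hinv)

variable (hinv : ∀ x, ι (ι x) = x)

@[simp]
theorem coe_involutionNorm_apply (v : M) : (involutionNorm hinv v : M) = v + ι v := rfl

theorem involutionNorm_apply_involution (v : M) :
    involutionNorm hinv (ι v) = involutionNorm hinv v :=
  Subtype.ext <| by simp [hinv, add_comm]

theorem involutionNorm_coe_eq_two_smul (m : LinearMap.ker (ι.toLinearMap - LinearMap.id)) :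
    involutionNorm hinv (m : M) = 2 • m :=
  Subtype.ext <| by simp [(mem_ker_sub_id_iff ι).1 m.2, two_smul]

end LinearEquiv

/-- Unlike `AddMonoidHom.toIntLinearMap`, this allows arbitrary `ℤ`-module instances: the
functionals on `L⁺` carry `AddCommGroup.toIntModule`, not `Submodule.module`. -/
def AddMonoidHom.toIntLinearMapOfModule {M N : Type*} [AddCommGroup M] [AddCommGroup N]
    [Module ℤ M] [Module ℤ N] (f : M →+ N) : M →ₗ[ℤ] N where
  toFun := f
  map_add' := f.map_add
  map_smul' := map_intCast_smul f ℤ ℤ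

open LinearEquiv in
theorem stmt_10_general (L : Type*) [AddCommGroup L] [Module ℤ L]
    (B : L →ₗ[ℤ] L →ₗ[ℤ] ℤ)
    (hunimod : Function.Bijective fun v : L => (B v : L →ₗ[ℤ] ℤ))
    (ι : L ≃ₗ[ℤ] L)
    (hiso : ∀ v w : L, B (ι v) (ι w) = B v w)
    (hinv : ∀ x : L, ι (ι x) = x) :
    ∀ φ : (LinearMap.ker (ι.toLinearMap - LinearMap.id)) →ₗ[ℤ] ℤ,
      ∃ y : LinearMap.ker (ι.toLinearMap - LinearMap.id),
        ∀ m : LinearMap.ker (ι.toLinearMap - LinearMap.id),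
          2 * φ m = B (y : L) (m : L) := by
  intro φ
  obtain ⟨x, hx⟩ := hunimod.surjective
    (φ.toAddMonoidHom.comp (involutionNorm hinv).toAddMonoidHom).toIntLinearMapOfModule
  have hBx : ∀ v, B x v = φ (involutionNorm hinv v) := fun v => LinearMap.congr_fun hx v
  have hx_fixed : ι x = x :=
    apply_eq_self_of_bilin_apply_eq hinv hunimod.injective hiso fun v => by
      rw [hBx, hBx, involutionNorm_apply_involution]
  refine ⟨⟨x, (mem_ker_sub_id_iff ι).2 hx_fixed⟩, fun m => ?_⟩
  rw [hBx, involutionNorm_coe_eq_two_smul, map_nsmul, two_nsmul, two_mul]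

/-- Let `ι` be an involutive isometry of an even unimodular lattice `L`, with
nondegenerate invariant sublattice `L⁺ = ker (ι - 1)`. Then the discriminant group
`(L⁺)*/L⁺` is annihilated by `2`: identifying `(L⁺)*` with `Hom(L⁺, ℤ)` via the form,
twice any functional on `L⁺` is represented by pairing against an element of `L⁺`. -/
theorem stmt_10 (L : Type*) [AddCommGroup L] [Module ℤ L] {r : ℕ} (b0 : Module.Basis (Fin r) ℤ L)
    (B : L →ₗ[ℤ] L →ₗ[ℤ] ℤ)
    (hsymm : ∀ v w : L, B v w = B w v)
    (heven : ∀ v : L, Even (B v v))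
    (hunimod : Function.Bijective fun v : L => (B v : L →ₗ[ℤ] ℤ))
    (ι : L ≃ₗ[ℤ] L)
    (hiso : ∀ v w : L, B (ι v) (ι w) = B v w)
    (hinv : ∀ x : L, ι (ι x) = x)
    (hnd : ∀ x : L, ι x = x → (∀ m : L, ι m = m → B x m = 0) → x = 0) :
    ∀ φ : (LinearMap.ker (ι.toLinearMap - LinearMap.id)) →ₗ[ℤ] ℤ,
      ∃ y : LinearMap.ker (ι.toLinearMap - LinearMap.id),
        ∀ m : LinearMap.ker (ι.toLinearMap - LinearMap.id),
          2 * φ m = B (y : L) (m : L) :=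
  stmt_10_general L B hunimod ι hiso hinv
end

section
/- Up to isometry, the positive definite even lattices of rank 2 and determinant 36 are exactly the three lattices with Gram matrices [[2,0],[0,18]], [[6,0],[0,6]] and [[4,2],[2,10]]. -/
/-- `G` is a symmetric, positive definite, even matrix of determinant `d`
(the Gram matrix of a positive definite even rank-2 lattice of determinant `d`). -/
def IsEvenPosDefOfDet (d : ℤ) (G : Matrix (Fin 2) (Fin 2) ℤ) : Prop :=
  G.IsSymm ∧ (∀ v : Fin 2 → ℤ, v ≠ 0 → 0 < dotProduct v (G.mulVec v)) ∧
    (∀ i, Even (G i i)) ∧ G.det = d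

/-- Two Gram matrices give isometric lattices iff they are `ℤ`-congruent. -/
def MatCongruent (G H : Matrix (Fin 2) (Fin 2) ℤ) : Prop :=
  ∃ P : Matrix (Fin 2) (Fin 2) ℤ, IsUnit P.det ∧ P.transpose * G * P = H

/-! Lagrange reduction: the congruences `(a, b, c) ↦ (c, -b, a)`, `(a, -b, c)` and
`(a, b + k a, c + 2 k b + k² a)` bring every positive definite binary form `!![a, b; b, c]` to one
with `0 ≤ 2 b ≤ a ≤ c`, the last one strictly decreasing `c` as long as `2 |b| > a`. For such a
form `36 = a c - b² ≥ 3 a² / 4`, so `a ≤ 6`, and evenness of `a` and `c` leaves exactly the three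
listed forms. Congruence preserves the determinant, evenness and the values represented by the
form; `2 x² + 18 y²` misses `6` (mod 8) and `4` (mod 3), and `6 x² + 6 y²` misses `4` (mod 3). -/

open Matrix

theorem Matrix.IsSymm.eq_fin_two {α : Type*} {G : Matrix (Fin 2) (Fin 2) α} (h : G.IsSymm) :
    G = !![G 0 0, G 0 1; G 0 1, G 1 1] := by
  ext i j; fin_cases i <;> fin_cases j <;> simp [h.apply 0 1]

theorem dotProduct_mulVec_fin_two (a b c : ℤ) (v : Fin 2 → ℤ) :
    v ⬝ᵥ !![a, b; b, c] *ᵥ v = a * v 0 ^ 2 + 2 * b * v 0 * v 1 + c * v 1 ^ 2 := by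
  simp only [dotProduct, mulVec, Fin.sum_univ_two, of_apply, cons_val', cons_val_zero,
    cons_val_one, empty_val', cons_val_fin_one]
  ring

theorem binaryForm_pos {a b c x y : ℤ} (ha : 0 < a) (hd : 0 < a * c - b * b)
    (hxy : x ≠ 0 ∨ y ≠ 0) : 0 < a * x ^ 2 + 2 * b * x * y + c * y ^ 2 := by
  by_cases hy : y = 0
  · subst hy
    have : 0 < x ^ 2 := by simpa [sq_pos_iff] using hxy
    nlinarith
  · have : 0 < y ^ 2 := by positivity
    -- `a q(x, y) = (a x + b y)² + (a c - b²) y²`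
    nlinarith [sq_nonneg (a * x + b * y), mul_pos hd this]

theorem binaryForm_even {a c : ℤ} (ha : Even a) (hc : Even c) (b x y : ℤ) :
    Even (a * x ^ 2 + 2 * b * x * y + c * y ^ 2) :=
  ((ha.mul_right _).add (even_two.mul_right _ |>.mul_right _ |>.mul_right _)).add (hc.mul_right _)

theorem isEvenPosDefOfDet_fin_two_iff (d a b c : ℤ) :
    IsEvenPosDefOfDet d !![a, b; b, c] ↔
      0 < a ∧ 0 < d ∧ Even a ∧ Even c ∧ a * c - b * b = d := by
  simp only [IsEvenPosDefOfDet, dotProduct_mulVec_fin_two, det_fin_two_of]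
  constructor
  · rintro ⟨-, hpos, heven, rfl⟩
    have ha : 0 < a := by simpa using hpos ![1, 0] (by simp)
    have had : 0 < a * (a * c - b * b) := by
      have := hpos ![b, -a] (by simp [ha.ne'])
      simp only [cons_val_zero, cons_val_one] at this
      nlinarith
    exact ⟨ha, pos_of_mul_pos_right had ha.le, by simpa using heven 0, by simpa using heven 1,
      by ring⟩
  · rintro ⟨ha, hd, hea, hec, rfl⟩
    refine ⟨?_, fun v hv => binaryForm_pos ha (by linarith) ?_, ?_, by ring⟩
    · ext i j; fin_cases i <;> fin_cases j <;> rfl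
    · by_contra! h
      exact hv (funext fun i => by fin_cases i <;> simp [h.1, h.2])
    · intro i; fin_cases i <;> simpa

theorem transpose_mul_mul_fin_two (p q r s a b c : ℤ) :
    !![p, q; r, s]ᵀ * !![a, b; b, c] * !![p, q; r, s] =
      !![a * p ^ 2 + 2 * b * p * r + c * r ^ 2, a * p * q + b * (p * s + q * r) + c * r * s;
        a * p * q + b * (p * s + q * r) + c * r * s, a * q ^ 2 + 2 * b * q * s + c * s ^ 2] := by
  ext i j; fin_cases i <;> fin_cases j <;> simp [mul_apply, Fin.sum_univ_two] <;> ring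

namespace MatCongruent

theorem refl (G : Matrix (Fin 2) (Fin 2) ℤ) : MatCongruent G G :=
  ⟨1, by simp, by simp⟩

theorem trans {G H K : Matrix (Fin 2) (Fin 2) ℤ} (hGH : MatCongruent G H)
    (hHK : MatCongruent H K) : MatCongruent G K := by
  obtain ⟨P, hP, rfl⟩ := hGH
  obtain ⟨Q, hQ, rfl⟩ := hHK
  exact ⟨P * Q, by simpa [det_mul] using hP.mul hQ, by simp only [transpose_mul, Matrix.mul_assoc]⟩

theorem det_eq {G H : Matrix (Fin 2) (Fin 2) ℤ} (h : MatCongruent G H) : H.det = G.det := by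
  obtain ⟨P, hP, rfl⟩ := h
  rw [det_mul, det_mul, det_transpose]
  linear_combination G.det * Int.isUnit_mul_self hP

theorem exists_apply_self {a b c : ℤ} {H : Matrix (Fin 2) (Fin 2) ℤ}
    (h : MatCongruent !![a, b; b, c] H) (i : Fin 2) :
    ∃ x y : ℤ, a * x ^ 2 + 2 * b * x * y + c * y ^ 2 = H i i := by
  obtain ⟨P, -, rfl⟩ := h
  rw [P.eta_fin_two, transpose_mul_mul_fin_two]
  fin_cases i
  · exact ⟨P 0 0, P 1 0, by simp⟩
  · exact ⟨P 0 1, P 1 1, by simp⟩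

end MatCongruent

theorem not_matCongruent_of_zmod (n : ℕ) {a c : ℤ} {H : Matrix (Fin 2) (Fin 2) ℤ}
    (h : ∀ x y : ZMod n, (a : ZMod n) * x ^ 2 + c * y ^ 2 ≠ (H 0 0 : ℤ)) :
    ¬ MatCongruent !![a, 0; 0, c] H := fun hGH => by
  obtain ⟨x, y, hxy⟩ := hGH.exists_apply_self 0
  exact h x y (by exact_mod_cast congrArg (Int.cast : ℤ → ZMod n) (by simpa using hxy))

theorem matCongruent_swap (a b c : ℤ) : MatCongruent !![a, b; b, c] !![c, -b; -b, a] :=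
  ⟨!![0, 1; -1, 0], by simp [det_fin_two_of], by
    rw [transpose_mul_mul_fin_two]; ext i j; fin_cases i <;> fin_cases j <;> simp⟩

theorem matCongruent_neg (a b c : ℤ) : MatCongruent !![a, b; b, c] !![a, -b; -b, c] :=
  ⟨!![1, 0; 0, -1], by simp [det_fin_two_of], by
    rw [transpose_mul_mul_fin_two]; ext i j; fin_cases i <;> fin_cases j <;> simp⟩

theorem matCongruent_shear (a b c k : ℤ) :
    MatCongruent !![a, b; b, c] !![a, b + k * a; b + k * a, c + 2 * k * b + k ^ 2 * a] :=
  ⟨!![1, k; 0, 1], by simp [det_fin_two_of], by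
    rw [transpose_mul_mul_fin_two]; ext i j; fin_cases i <;> fin_cases j <;> simp <;> ring⟩

theorem exists_two_mul_abs_add_mul_le (b : ℤ) {a : ℤ} (ha : 0 < a) :
    ∃ k : ℤ, 2 * |b + k * a| ≤ a := by
  refine ⟨-((2 * b + a) / (2 * a)), ?_⟩
  have hr₀ := Int.emod_nonneg (2 * b + a) (by positivity : 2 * a ≠ 0)
  have hr₁ := Int.emod_lt_of_pos (2 * b + a) (by positivity : 0 < 2 * a)
  have hqr := Int.emod_def (2 * b + a) (2 * a)
  suffices |2 * (b + -((2 * b + a) / (2 * a)) * a)| ≤ a by rwa [abs_mul, abs_two] at this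
  rw [abs_le]
  constructor <;> linarith

theorem exists_reduced_matCongruent {a b c : ℤ} (ha : 0 < a) (hd : 0 < a * c - b * b) :
    ∃ a' b' c' : ℤ, MatCongruent !![a, b; b, c] !![a', b'; b', c'] ∧
      0 ≤ 2 * b' ∧ 2 * b' ≤ a' ∧ a' ≤ c' := by
  induction hn : (a + c).toNat using Nat.strong_induction_on generalizing a b c with
  | _ n ih =>
  have hc : 0 < c := by nlinarith
  wlog hac : a ≤ c generalizing a b c
  · obtain ⟨a', b', c', h, hred⟩ := this (b := -b) hc (by linear_combination hd)
      (by rw [add_comm]; exact hn) ha (by linarith)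
    exact ⟨a', b', c', (matCongruent_swap a b c).trans h, hred⟩
  by_cases hb : 2 * |b| ≤ a
  · rcases le_total 0 b with hb₀ | hb₀
    · exact ⟨a, b, c, .refl _, by omega, by rw [abs_of_nonneg hb₀] at hb; omega, hac⟩
    · exact ⟨a, -b, c, matCongruent_neg a b c, by omega, by rw [abs_of_nonpos hb₀] at hb; omega,
        hac⟩
  · obtain ⟨k, hk⟩ := exists_two_mul_abs_add_mul_le b ha
    have hsq : (b + k * a) ^ 2 < b ^ 2 := sq_lt_sq.2 (by linarith)
    have hlt : c + 2 * k * b + k ^ 2 * a < c := by nlinarith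
    obtain ⟨a', b', c', h, hred⟩ := ih (a + (c + 2 * k * b + k ^ 2 * a)).toNat (by omega)
      (b := b + k * a) ha (by linear_combination hd) rfl
    exact ⟨a', b', c', (matCongruent_shear a b c k).trans h, hred⟩

theorem eq_of_reduced_of_det_eq_36 {a b c : ℤ} (hb₀ : 0 ≤ 2 * b) (hba : 2 * b ≤ a)
    (hac : a ≤ c) (hd : a * c - b * b = 36) (ha : Even a) (hc : Even c) :
    (a = 2 ∧ b = 0 ∧ c = 18) ∨ (a = 6 ∧ b = 0 ∧ c = 6) ∨ (a = 4 ∧ b = 2 ∧ c = 10) := by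
  have ha₆ : a ≤ 6 := by nlinarith
  have ha₀ : 0 < a := by nlinarith
  obtain ⟨x, rfl⟩ := ha
  obtain ⟨y, rfl⟩ := hc
  have hx₀ : 0 < x := by omega
  have hx₃ : x ≤ 3 := by omega
  have hb₁ : 0 ≤ b := by omega
  have hb₂ : b ≤ 3 := by omega
  interval_cases x <;> interval_cases b <;> omega

/-- Up to isometry, the positive definite even lattices of rank 2 and determinant 36 are
exactly the three lattices with Gram matrices `[[2,0],[0,18]]`, `[[6,0],[0,6]]` and
`[[4,2],[2,10]]`. -/
theorem stmt_14 :
    IsEvenPosDefOfDet 36 !![2, 0; 0, 18] ∧ IsEvenPosDefOfDet 36 !![6, 0; 0, 6] ∧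
    IsEvenPosDefOfDet 36 !![4, 2; 2, 10] ∧
    (∀ G : Matrix (Fin 2) (Fin 2) ℤ, IsEvenPosDefOfDet 36 G →
      MatCongruent G !![2, 0; 0, 18] ∨ MatCongruent G !![6, 0; 0, 6] ∨
        MatCongruent G !![4, 2; 2, 10]) ∧
    ¬ MatCongruent !![2, 0; 0, 18] !![6, 0; 0, 6] ∧
    ¬ MatCongruent !![2, 0; 0, 18] !![4, 2; 2, 10] ∧
    ¬ MatCongruent !![6, 0; 0, 6] !![4, 2; 2, 10] := by
  refine ⟨(isEvenPosDefOfDet_fin_two_iff ..).2 (by decide),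
    (isEvenPosDefOfDet_fin_two_iff ..).2 (by decide),
    (isEvenPosDefOfDet_fin_two_iff ..).2 (by decide), fun G hG => ?_,
    not_matCongruent_of_zmod 8 (by decide), not_matCongruent_of_zmod 3 (by decide),
    not_matCongruent_of_zmod 3 (by decide)⟩
  obtain ⟨a, b, c, rfl⟩ : ∃ a b c, G = !![a, b; b, c] := ⟨_, _, _, hG.1.eq_fin_two⟩
  obtain ⟨ha, -, hea, hec, hd⟩ := (isEvenPosDefOfDet_fin_two_iff ..).1 hG
  obtain ⟨a', b', c', hGH, hb₀, hba, hac⟩ :=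
    exists_reduced_matCongruent ha (by omega : 0 < a * c - b * b)
  have hd' : a' * c' - b' * b' = 36 := by
    simpa [det_fin_two_of, hd] using hGH.det_eq
  have heven (i : Fin 2) : Even (!![a', b'; b', c'] i i) := by
    obtain ⟨x, y, hxy⟩ := hGH.exists_apply_self i
    exact hxy ▸ binaryForm_even hea hec _ x y
  rcases eq_of_reduced_of_det_eq_36 hb₀ hba hac hd' (by simpa using heven 0)
      (by simpa using heven 1) with ⟨rfl, rfl, rfl⟩ | ⟨rfl, rfl, rfl⟩ | ⟨rfl, rfl, rfl⟩
  exacts [.inl hGH, .inr (.inl hGH), .inr (.inr hGH)]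
end
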